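/- arXiv:2303.03495 — 2 statements merged into one kernel-verified Lean document; each statement's English description precedes it below -/
import Mathlib

section
/- Let K₁, K₂, μ, τ, κ be strictly positive real numbers with τ ≤ κ, μτ ≥ 4K₂κ, K₂κ ≤ 1, and μ²K₁κ < K₂(1 - K₂κ)(1 - (K₂/2)κ). Then (exp(-μτ/2) + 2μτK₁·(1 - exp(-μτ/2)))·exp(K₂κ) < 1. -/
set_option maxHeartbeats 1000000 in
/-- Contraction of the per-observation `H¹` factor:
under the stated parameter conditions,
`(exp(-μτ/2) + 2μτK₁(1 - exp(-μτ/2)))·exp(K₂κ) < 1`. -/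
theorem H1_contraction_factor (K₁ K₂ μ τ κ : ℝ)
    (hK₁ : 0 < K₁) (hK₂ : 0 < K₂) (hμ : 0 < μ) (hτ : 0 < τ) (hκ : 0 < κ)
    (hτκ : τ ≤ κ) (hμτ : μ * τ ≥ 4 * K₂ * κ) (hK₂κ : K₂ * κ ≤ 1)
    (hquad : μ ^ 2 * K₁ * κ < K₂ * (1 - K₂ * κ) * (1 - K₂ / 2 * κ)) :
    (Real.exp (-(μ * τ) / 2) + 2 * μ * τ * K₁ * (1 - Real.exp (-(μ * τ) / 2)))
      * Real.exp (K₂ * κ) < 1 := by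
  set a := K₂ * κ with ha
  set E := Real.exp (-a) with hE
  set e := Real.exp (-(μ * τ) / 2) with he
  set c := 2 * μ * τ * K₁ with hc
  clear_value a E e c
  have ha0 : 0 < a := by rw [ha]; exact mul_pos hK₂ hκ
  have hq2 : μ ^ 2 * K₁ * κ < K₂ * (1 - a) * (1 - a / 2) := by
    calc μ ^ 2 * K₁ * κ < K₂ * (1 - a) * (1 - K₂ / 2 * κ) := hquad
      _ = K₂ * (1 - a) * (1 - a / 2) := by rw [ha]; ring
  -- a < 1
  have ha1 : a < 1 := by
    by_contra h
    push_neg at h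
    have h1 : (1 : ℝ) - a ≤ 0 := by linarith
    have h2 : (0:ℝ) < 1 - a / 2 := by linarith
    have h3 : 0 < μ ^ 2 * K₁ * κ := by positivity
    have h4 : K₂ * (1 - a) * (1 - a / 2) ≤ 0 := by
      have := mul_nonneg (mul_pos hK₂ h2).le (neg_nonneg.mpr h1)
      nlinarith [this]
    linarith
  -- μ ≥ 4 K₂
  have hμ4 : μ ≥ 4 * K₂ := by
    have : μ * τ ≥ 4 * K₂ * τ := le_trans (by nlinarith) hμτ
    nlinarith
  -- c < (1-a)(1-a/2)/2
  have hcb : c < (1 - a) * (1 - a / 2) / 2 := by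
    have h1 : K₂ * c ≤ μ ^ 2 * K₁ * κ / 2 := by
      nlinarith [mul_nonneg (mul_nonneg (mul_nonneg hμ.le hK₁.le) hκ.le) (sub_nonneg.mpr hμ4),
        mul_nonneg (mul_nonneg (mul_nonneg hK₂.le hμ.le) hK₁.le) (sub_nonneg.mpr hτκ)]
    have h2 : K₂ * c < K₂ * ((1 - a) * (1 - a / 2) / 2) := by nlinarith [hq2]
    exact lt_of_mul_lt_mul_left h2 hK₂.le
  have hc0 : 0 < c := by rw [hc]; positivity
  -- (1-a) * exp a ≤ 1
  have hexpa : (1 - a) * Real.exp a ≤ 1 := by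
    have h := Real.add_one_le_exp (-a)
    have hpos : (0:ℝ) < Real.exp a := Real.exp_pos a
    have h' : (1 - a) ≤ Real.exp (-a) := by linarith
    calc (1 - a) * Real.exp a ≤ Real.exp (-a) * Real.exp a := by nlinarith
      _ = 1 := by rw [← Real.exp_add]; simp
  -- p (exp a + 1) ≤ 2
  have hp2 : (1 - a) * (1 - a / 2) * (Real.exp a + 1) ≤ 2 := by
    nlinarith [Real.exp_pos a, sq_nonneg (2 - a)]
  -- c (1 + E) < E
  have hE1 : Real.exp a * E = 1 := by rw [hE, ← Real.exp_add]; simp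
  have hEpos : 0 < E := hE ▸ Real.exp_pos _
  have hcE : c * (1 + E) < E := by
    have h1 : c * (Real.exp a + 1) < (1 - a) * (1 - a / 2) / 2 * (Real.exp a + 1) := by
      have : (0:ℝ) < Real.exp a + 1 := by positivity
      exact mul_lt_mul_of_pos_right hcb this
    have h2 : c * (Real.exp a + 1) < 1 := by nlinarith
    have h3 : c * (Real.exp a + 1) * E < 1 * E := mul_lt_mul_of_pos_right h2 hEpos
    have h4 : c * (1 + E) = c * (Real.exp a + 1) * E := by
      linear_combination (-c) * hE1
    rw [h4]; linarith
  -- e ≤ E²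
  have hE2 : E ^ 2 = Real.exp (-(2 * a)) := by
    rw [sq, hE, ← Real.exp_add]; congr 1; ring
  have heE : e ≤ E ^ 2 := by
    rw [hE2, he]
    exact Real.exp_le_exp.mpr (by rw [ha]; linarith)
  have hEl1 : E < 1 := by
    rw [hE]; exact Real.exp_lt_one_iff.mpr (by linarith)
  have he0 : 0 < e := he ▸ Real.exp_pos _
  have hc1 : c < 1 := by
    have hlt : (1 - a) * (1 - a / 2) / 2 < 1 := by
      nlinarith [mul_pos ha0 (sub_pos.mpr ha1)]
    linarith
  -- e + c(1-e) < E
  have hmain : e + c * (1 - e) < E := by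
    nlinarith [mul_nonneg (sub_nonneg.mpr hc1.le) (sub_nonneg.mpr heE),
      mul_pos (sub_pos.mpr hEl1) (sub_pos.mpr hcE)]
  -- conclude
  have hpos : 0 < Real.exp a := Real.exp_pos _
  calc (e + c * (1 - e)) * Real.exp a
      < E * Real.exp a := mul_lt_mul_of_pos_right hmain hpos
    _ = 1 := by rw [mul_comm]; exact hE1
end

section
/- Let t₀ be real, 0 < τ ≤ κ, α > 0, Λ ≥ 0, a ≥ 0, and let y : ℝ → ℝ be continuous and nonnegative on [t₀, t₀ + κ] and differentiable on (t₀, t₀ + κ), satisfying y'(t) ≤ -α·y(t) + Λ·y(t₀) for t ∈ (t₀, t₀ + τ) and y'(t) ≤ a·y(t) for t ∈ (t₀ + τ, t₀ + κ). Then y(t₀ + κ) ≤ y(t₀)·(exp(-ατ) + (Λ/α)·(1 - exp(-ατ)))·exp(a·(κ - τ)). -/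
open Set Filter Real Topology

private lemma aux_gronwall (a b K ε : ℝ) (f : ℝ → ℝ) (hab : a < b)
    (hcont : ContinuousOn f (Icc a b))
    (hdiff : ∀ x ∈ Ioo a b, DifferentiableAt ℝ f x)
    (hbound : ∀ x ∈ Ioo a b, deriv f x ≤ K * f x + ε) :
    f b ≤ gronwallBound (f a) K ε (b - a) := by
  set F : ℝ → ℝ := fun s => gronwallBound (f s) K ε (b - s) with hF
  have key : ∀ s ∈ Ioo a b, f b ≤ F s := by
    intro s hs
    have hsub : Ico s b ⊆ Ioo a b := fun x hx => ⟨lt_of_lt_of_le hs.1 hx.1, hx.2⟩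
    have := le_gronwallBound_of_liminf_deriv_right_le (f := f) (f' := deriv f)
      (δ := f s) (K := K) (ε := ε) (a := s) (b := b)
      (hcont.mono (Icc_subset_Icc (le_of_lt hs.1) le_rfl))
      (fun x hx r hr =>
        (((hdiff x (hsub hx)).hasDerivAt).hasDerivWithinAt (s := Ici x)).liminf_right_slope_le hr)
      le_rfl (fun x hx => hbound x (hsub hx)) b ⟨le_of_lt hs.2, le_rfl⟩
    exact this
  have hcF : ContinuousWithinAt F (Icc a b) a := by
    have h1 : ContinuousWithinAt f (Icc a b) a := hcont a ⟨le_rfl, le_of_lt hab⟩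
    rcases eq_or_ne K 0 with hK | hK
    · simp only [hF, hK, gronwallBound_K0]
      exact h1.add ((continuous_const.mul (continuous_const.sub continuous_id)).continuousWithinAt)
    · simp only [hF, gronwallBound_of_K_ne_0 hK]
      exact (h1.mul ((Real.continuous_exp.comp
          (continuous_const.mul (continuous_const.sub continuous_id))).continuousWithinAt)).add
        ((continuous_const.mul ((Real.continuous_exp.comp
          (continuous_const.mul (continuous_const.sub continuous_id))).sub
          continuous_const)).continuousWithinAt)
  have hne : (𝓝[Ioo a b] a).NeBot := left_nhdsWithin_Ioo_neBot hab
  have htend : Tendsto F (𝓝[Ioo a b] a) (𝓝 (F a)) :=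
    (hcF.mono Ioo_subset_Icc_self).tendsto
  exact ge_of_tendsto htend (eventually_mem_nhdsWithin.mono fun s hs => key s hs)

/-- One cycle of the two-phase differential inequality: damping with a source on the
assimilation window `(t₀, t₀+τ)`, exponential growth on `(t₀+τ, t₀+κ)`, yields the
per-cycle contraction factor
`(exp(-ατ) + (Λ/α)(1 - exp(-ατ)))·exp(a(κ-τ))`. -/
theorem two_phase_cycle_bound (t₀ τ κ α Λ a : ℝ) (y : ℝ → ℝ)
    (hτ : 0 < τ) (hτκ : τ ≤ κ) (hα : 0 < α) (hΛ : 0 ≤ Λ) (ha : 0 ≤ a)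
    (hcont : ContinuousOn y (Set.Icc t₀ (t₀ + κ)))
    (hnonneg : ∀ t ∈ Set.Icc t₀ (t₀ + κ), 0 ≤ y t)
    (hdiff : ∀ t ∈ Set.Ioo t₀ (t₀ + κ), DifferentiableAt ℝ y t)
    (h₁ : ∀ t ∈ Set.Ioo t₀ (t₀ + τ), deriv y t ≤ -α * y t + Λ * y t₀)
    (h₂ : ∀ t ∈ Set.Ioo (t₀ + τ) (t₀ + κ), deriv y t ≤ a * y t) :
    y (t₀ + κ) ≤
      y t₀ * (Real.exp (-α * τ) + Λ / α * (1 - Real.exp (-α * τ)))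
        * Real.exp (a * (κ - τ)) := by
  have hτκ' : t₀ + τ ≤ t₀ + κ := by linarith
  -- Phase 1
  have phase1 : y (t₀ + τ) ≤
      y t₀ * (Real.exp (-α * τ) + Λ / α * (1 - Real.exp (-α * τ))) := by
    have hsub : Ioo t₀ (t₀ + τ) ⊆ Ioo t₀ (t₀ + κ) :=
      Ioo_subset_Ioo le_rfl hτκ'
    have := aux_gronwall t₀ (t₀ + τ) (-α) (Λ * y t₀) y (by linarith)
      (hcont.mono (Icc_subset_Icc le_rfl hτκ'))
      (fun x hx => hdiff x (hsub hx))
      (fun x hx => h₁ x hx)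
    have hKne : (-α : ℝ) ≠ 0 := neg_ne_zero.mpr hα.ne'
    rw [gronwallBound_of_K_ne_0 hKne] at this
    have harith : t₀ + τ - t₀ = τ := by ring
    rw [harith] at this
    refine this.trans (le_of_eq ?_)
    field_simp
    ring
  -- Phase 2
  have hexp_pos : (0:ℝ) ≤ Real.exp (a * (κ - τ)) := le_of_lt (Real.exp_pos _)
  have hfac_nonneg : 0 ≤ y t₀ * (Real.exp (-α * τ) + Λ / α * (1 - Real.exp (-α * τ))) := by
    refine le_trans ?_ phase1
    exact hnonneg _ ⟨by linarith, hτκ'⟩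
  rcases eq_or_lt_of_le hτκ with heq | hlt
  · subst heq
    calc y (t₀ + τ) ≤ y t₀ * (Real.exp (-α * τ) + Λ / α * (1 - Real.exp (-α * τ))) := phase1
      _ ≤ _ := by
          rw [sub_self, mul_zero, Real.exp_zero, mul_one]
  · have phase2 : y (t₀ + κ) ≤ y (t₀ + τ) * Real.exp (a * (κ - τ)) := by
      have := aux_gronwall (t₀ + τ) (t₀ + κ) a 0 y (by linarith)
        (hcont.mono (Icc_subset_Icc (by linarith) le_rfl))
        (fun x hx => hdiff x ⟨by linarith [hx.1], hx.2⟩)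
        (fun x hx => by simpa using h₂ x hx)
      rw [gronwallBound_ε0] at this
      have harith : t₀ + κ - (t₀ + τ) = κ - τ := by ring
      rwa [harith] at this
    calc y (t₀ + κ) ≤ y (t₀ + τ) * Real.exp (a * (κ - τ)) := phase2
      _ ≤ _ := mul_le_mul_of_nonneg_right phase1 hexp_pos
end
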